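/- arXiv:2605.13832 — 7 statements merged into one kernel-verified Lean document; each statement's English description precedes it below -/
import Mathlib

section
/- (Rains' Lemma, Lemma 1) Let d ≥ 1 and let A be an arbitrary complex d×d matrix. Then the matrix [S · (A ⊗ Aᴴ)]^{T₁}, the partial transpose on the first factor of the product of the swap operator with the Kronecker product of A and its conjugate transpose, is positive semidefinite. -/
open Matrix Kronecker ComplexOrder

/-- The swap operator on `ℂ^d ⊗ ℂ^d`. -/
def swapOp (d : ℕ) : Matrix (Fin d × Fin d) (Fin d × Fin d) ℂ :=
  Matrix.of fun p q => if p.1 = q.2 ∧ p.2 = q.1 then 1 else 0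

/-- Partial transpose on the first tensor factor. -/
def ptrans1 {ι κ : Type*} (M : Matrix (ι × κ) (ι × κ) ℂ) : Matrix (ι × κ) (ι × κ) ℂ :=
  Matrix.of fun p q => M (q.1, p.2) (p.1, q.2)

/-- Rains' Lemma: `[S · (A ⊗ Aᴴ)]^{T₁}` is positive semidefinite. -/
theorem stmt0 (d : ℕ) (hd : 1 ≤ d) (A : Matrix (Fin d) (Fin d) ℂ) :
    (ptrans1 (swapOp d * (A ⊗ₖ Aᴴ))).PosSemidef := by
  have h : ptrans1 (swapOp d * (A ⊗ₖ Aᴴ)) =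
      (Matrix.replicateRow Unit (star fun p : Fin d × Fin d => A p.2 p.1))ᴴ *
        Matrix.replicateRow Unit (star fun p : Fin d × Fin d => A p.2 p.1) := by
    ext ⟨i, j⟩ ⟨k, l⟩
    simp [ptrans1, swapOp, Matrix.mul_apply, kroneckerMap_apply, conjTranspose_apply,
      Fintype.sum_prod_type, Matrix.replicateRow_apply, ite_and, mul_comm]
  rw [h]
  exact posSemidef_conjTranspose_mul_self _
end

section
/- (Observation 1, generalized) Let n ≥ 1, let I be a finite index set, p : I → ℝ with p i ≥ 0 and Σ_i p_i = 1, let μ_i be density matrices on ℂ^{2^n} (indexed by Fin n → Fin 2), and set ρ = Σ_i p_i · (μ_i ⊗ μ_i). Then there exists a real symmetric positive semidefinite matrix Γ indexed by Pauli labels s : Fin n → Fin 4 such that: Γ 0 0 = 1 (where 0 is the all-zero label); Γ s 0 = Γ s s for all s; Γ s t = 0 whenever E_s and E_t anticommute; and (Γ s s : ℂ) = tr((E_s ⊗ E_sᴴ) · ρ) for all s. -/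
/-! For one state `μ` with expectations `a s = tr(E_s μ)` (real, as `E_s` and `μ` are Hermitian),
take `Γ_μ s t = a s · a t · Re tr(E_s E_t μ)`. The real matrix `Re tr(E_s E_t μ)` is positive
semidefinite because its quadratic form at `x` is `tr(A μ A) ≥ 0` for the Hermitian
`A = Σ x_s E_s`, and conjugating by `diag a` preserves this; so `Γ = Σ p_i Γ_{μ_i}` is positive
semidefinite. If `E_s` and `E_t` anticommute then `tr(E_s E_t μ)` equals minus its own conjugate,
hence `Γ s t = 0`; and `E_s² = 1`, `E_0 = 1` give `Γ s s = Γ s 0 = Σ p_i tr(E_s μ_i)²`,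
which is `tr((E_s ⊗ E_s) ρ)`. -/

open Matrix Kronecker ComplexOrder

/-- The four Pauli matrices `σ₀, σ₁, σ₂, σ₃`. -/
def pauli : Fin 4 → Matrix (Fin 2) (Fin 2) ℂ :=
  ![!![1, 0; 0, 1], !![0, 1; 1, 0], !![0, -Complex.I; Complex.I, 0], !![1, 0; 0, -1]]

/-- The Pauli string `E_s`, `E_s x y = ∏_k (σ_{s k}) (x k) (y k)`. -/
def pauliString (n : ℕ) (s : Fin n → Fin 4) :
    Matrix (Fin n → Fin 2) (Fin n → Fin 2) ℂ :=
  Matrix.of fun x y => ∏ k, pauli (s k) (x k) (y k)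

/-- The weight of a Pauli label: the number of non-identity tensor factors. -/
def wt {n : ℕ} (s : Fin n → Fin 4) : ℕ :=
  (Finset.univ.filter fun k => s k ≠ 0).card

/-- The swap operator on `ℂ^{2^n} ⊗ ℂ^{2^n}`. -/
def swapN (n : ℕ) :
    Matrix ((Fin n → Fin 2) × (Fin n → Fin 2)) ((Fin n → Fin 2) × (Fin n → Fin 2)) ℂ :=
  Matrix.of fun p q => if p.1 = q.2 ∧ p.2 = q.1 then 1 else 0

section PiKronecker

variable {ι m R : Type*} [Fintype ι]

def piKronecker [CommSemiring R] (A : ι → Matrix m m R) : Matrix (ι → m) (ι → m) R :=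
  of fun x y => ∏ k, A k (x k) (y k)

theorem piKronecker_mul [Fintype m] [DecidableEq ι] [CommSemiring R] (A B : ι → Matrix m m R) :
    piKronecker A * piKronecker B = piKronecker (A * B) := by
  ext x y
  simp only [piKronecker, mul_apply, of_apply, Pi.mul_apply, Finset.prod_univ_sum,
    Fintype.piFinset_univ, Finset.prod_mul_distrib]

theorem piKronecker_one [DecidableEq m] [CommSemiring R] :
    piKronecker (1 : ι → Matrix m m R) = 1 := by
  ext x y
  by_cases h : x = y
  · subst h
    simp [piKronecker]
  · obtain ⟨k, hk⟩ := Function.ne_iff.mp h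
    simp [piKronecker, one_apply_ne h, Finset.prod_eq_zero (Finset.mem_univ k), hk]

theorem piKronecker_conjTranspose [CommSemiring R] [StarRing R] (A : ι → Matrix m m R) :
    (piKronecker A)ᴴ = piKronecker fun k => (A k)ᴴ := by
  ext x y
  simp [piKronecker, star_prod]

end PiKronecker

theorem pauli_mul_self (j : Fin 4) : pauli j * pauli j = 1 := by
  fin_cases j <;> ext a b <;> fin_cases a <;> fin_cases b <;> simp [pauli, mul_apply, one_apply]

theorem pauli_zero : pauli 0 = 1 := by
  ext a b; fin_cases a <;> fin_cases b <;> simp [pauli]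

theorem pauli_isHermitian (j : Fin 4) : (pauli j).IsHermitian := by
  fin_cases j <;> ext a b <;> fin_cases a <;> fin_cases b <;> simp [pauli]

theorem pauliString_eq_piKronecker (n : ℕ) (s : Fin n → Fin 4) :
    pauliString n s = piKronecker (pauli ∘ s) := rfl

theorem pauliString_mul_self (n : ℕ) (s : Fin n → Fin 4) :
    pauliString n s * pauliString n s = 1 := by
  rw [pauliString_eq_piKronecker, piKronecker_mul, ← piKronecker_one]
  exact congrArg piKronecker (funext fun k => pauli_mul_self (s k))

theorem pauliString_zero (n : ℕ) : pauliString n 0 = 1 := by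
  rw [pauliString_eq_piKronecker, ← piKronecker_one]
  exact congrArg piKronecker (funext fun _ => pauli_zero)

theorem pauliString_isHermitian (n : ℕ) (s : Fin n → Fin 4) :
    (pauliString n s).IsHermitian := by
  rw [IsHermitian, pauliString_eq_piKronecker, piKronecker_conjTranspose]
  exact congrArg piKronecker (funext fun k => pauli_isHermitian (s k))

section MomentMatrix

variable {κ m : Type*} [Fintype m]

theorem star_trace_mul_mul_of_isHermitian {A B μ : Matrix m m ℂ} (hA : A.IsHermitian)
    (hB : B.IsHermitian) (hμ : μ.IsHermitian) :
    star (A * B * μ).trace = (B * A * μ).trace := by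
  rw [← trace_conjTranspose, conjTranspose_mul, conjTranspose_mul, hA.eq, hB.eq, hμ.eq,
    trace_mul_comm, Matrix.mul_assoc]

theorem ofReal_re_trace_mul_of_isHermitian {A μ : Matrix m m ℂ} (hA : A.IsHermitian)
    (hμ : μ.IsHermitian) : ((A * μ).trace.re : ℂ) = (A * μ).trace := by
  refine Complex.conj_eq_iff_re.mp ?_
  rw [← Complex.star_def, ← trace_conjTranspose, conjTranspose_mul, hA.eq, hμ.eq,
    trace_mul_comm]

def momentMatrix (E : κ → Matrix m m ℂ) (μ : Matrix m m ℂ) : Matrix κ κ ℝ :=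
  of fun s t => (E s * E t * μ).trace.re

def expectation (E : κ → Matrix m m ℂ) (μ : Matrix m m ℂ) (s : κ) : ℝ :=
  (E s * μ).trace.re

variable {E : κ → Matrix m m ℂ} {μ : Matrix m m ℂ}

theorem momentMatrix_comm (hE : ∀ s, (E s).IsHermitian) (hμ : μ.IsHermitian) (s t : κ) :
    momentMatrix E μ s t = momentMatrix E μ t s := by
  simp only [momentMatrix, of_apply, ← star_trace_mul_mul_of_isHermitian (hE s) (hE t) hμ,
    Complex.star_def, Complex.conj_re]

theorem momentMatrix_eq_zero_of_anticommute (hE : ∀ s, (E s).IsHermitian) (hμ : μ.IsHermitian)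
    {s t : κ} (h : E s * E t = -(E t * E s)) : momentMatrix E μ s t = 0 := by
  have hsym := momentMatrix_comm hE hμ s t
  simp only [momentMatrix, of_apply, h, Matrix.neg_mul, trace_neg, Complex.neg_re] at hsym ⊢
  linarith

theorem dotProduct_momentMatrix_mulVec [Fintype κ] (x : κ → ℝ) :
    star x ⬝ᵥ momentMatrix E μ *ᵥ x =
      ((∑ s, x s • E s) * (∑ s, x s • E s) * μ).trace.re := by
  rw [Finset.sum_mul_sum]
  simp only [Finset.sum_mul, trace_sum, Complex.re_sum, mul_smul_comm,
    smul_mul_assoc, trace_smul, Complex.smul_re, dotProduct, mulVec, momentMatrix, of_apply,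
    star_trivial, Finset.mul_sum, smul_eq_mul]
  exact Finset.sum_congr rfl fun s _ => Finset.sum_congr rfl fun t _ => by ring

theorem momentMatrix_posSemidef [Fintype κ] (hE : ∀ s, (E s).IsHermitian)
    (hμ : μ.PosSemidef) : (momentMatrix E μ).PosSemidef := by
  refine .of_dotProduct_mulVec_nonneg ?_ fun x => ?_
  · exact isHermitian_iff_isSymm.mpr (IsSymm.ext fun s t => momentMatrix_comm hE hμ.1 t s)
  · set A := ∑ s, x s • E s
    have hA : A.IsHermitian := by
      simp only [A, IsHermitian, conjTranspose_sum, conjTranspose_smul, star_trivial, (hE _).eq]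
    have hnonneg : 0 ≤ (Aᴴ * μ * A).trace := (hμ.conjTranspose_mul_mul_same A).trace_nonneg
    rw [hA.eq, trace_mul_cycle] at hnonneg
    rw [dotProduct_momentMatrix_mulVec]
    exact (Complex.nonneg_iff.mp hnonneg).1

def scaledMomentMatrix (E : κ → Matrix m m ℂ) (μ : Matrix m m ℂ) : Matrix κ κ ℝ :=
  of fun s t => expectation E μ s * momentMatrix E μ s t * expectation E μ t

theorem scaledMomentMatrix_apply (s t : κ) : scaledMomentMatrix E μ s t =
    expectation E μ s * momentMatrix E μ s t * expectation E μ t :=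
  rfl

theorem scaledMomentMatrix_eq_diagonal_mul_mul_diagonal [Fintype κ] [DecidableEq κ] :
    scaledMomentMatrix E μ =
      diagonal (expectation E μ) * momentMatrix E μ * diagonal (expectation E μ) := by
  ext s t
  simp only [scaledMomentMatrix_apply, diagonal_mul, mul_diagonal]

theorem scaledMomentMatrix_posSemidef [Fintype κ] (hE : ∀ s, (E s).IsHermitian)
    (hμ : μ.PosSemidef) : (scaledMomentMatrix E μ).PosSemidef := by
  classical
  simpa only [scaledMomentMatrix_eq_diagonal_mul_mul_diagonal, diagonal_conjTranspose,
    star_trivial] using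
    (momentMatrix_posSemidef hE hμ).conjTranspose_mul_mul_same (diagonal (expectation E μ))

theorem scaledMomentMatrix_eq_zero_of_anticommute (hE : ∀ s, (E s).IsHermitian)
    (hμ : μ.IsHermitian) {s t : κ} (h : E s * E t = -(E t * E s)) :
    scaledMomentMatrix E μ s t = 0 := by
  rw [scaledMomentMatrix_apply, momentMatrix_eq_zero_of_anticommute hE hμ h, mul_zero, zero_mul]

end MomentMatrix

section PauliMoments

variable {n : ℕ} {μ : Matrix (Fin n → Fin 2) (Fin n → Fin 2) ℂ}

theorem expectation_pauliString_zero (htr : μ.trace = 1) :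
    expectation (pauliString n) μ 0 = 1 := by
  simp [expectation, pauliString_zero, htr]

theorem momentMatrix_pauliString_self (htr : μ.trace = 1) (s : Fin n → Fin 4) :
    momentMatrix (pauliString n) μ s s = 1 := by
  simp [momentMatrix, pauliString_mul_self, htr]

theorem momentMatrix_pauliString_zero_right (s : Fin n → Fin 4) :
    momentMatrix (pauliString n) μ s 0 = expectation (pauliString n) μ s := by
  simp [momentMatrix, expectation, pauliString_zero]

theorem scaledMomentMatrix_pauliString_zero_zero (htr : μ.trace = 1) :
    scaledMomentMatrix (pauliString n) μ 0 0 = 1 := by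
  simp [scaledMomentMatrix_apply, expectation_pauliString_zero htr,
    momentMatrix_pauliString_self htr]

theorem scaledMomentMatrix_pauliString_zero_right (htr : μ.trace = 1) (s : Fin n → Fin 4) :
    scaledMomentMatrix (pauliString n) μ s 0 = scaledMomentMatrix (pauliString n) μ s s := by
  simp [scaledMomentMatrix_apply, expectation_pauliString_zero htr,
    momentMatrix_pauliString_self htr, momentMatrix_pauliString_zero_right]

theorem ofReal_scaledMomentMatrix_pauliString_self (hμ : μ.IsHermitian) (htr : μ.trace = 1)
    (s : Fin n → Fin 4) : (scaledMomentMatrix (pauliString n) μ s s : ℂ) =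
      ((pauliString n s ⊗ₖ (pauliString n s)ᴴ) * (μ ⊗ₖ μ)).trace := by
  rw [scaledMomentMatrix_apply, momentMatrix_pauliString_self htr, mul_one, ← mul_kronecker_mul,
    trace_kronecker, (pauliString_isHermitian n s).eq, Complex.ofReal_mul, expectation,
    ofReal_re_trace_mul_of_isHermitian (pauliString_isHermitian n s) hμ]

end PauliMoments

theorem stmt11_general (n : ℕ) {I : Type*} [Fintype I]
    (p : I → ℝ) (hp : ∀ i, 0 ≤ p i) (hsum : ∑ i, p i = 1)
    (μ : I → Matrix (Fin n → Fin 2) (Fin n → Fin 2) ℂ)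
    (hpsd : ∀ i, (μ i).PosSemidef) (htr : ∀ i, (μ i).trace = 1) :
    ∃ Γ : Matrix (Fin n → Fin 4) (Fin n → Fin 4) ℝ,
      Γ.IsSymm ∧ Γ.PosSemidef ∧
      Γ 0 0 = 1 ∧
      (∀ s, Γ s 0 = Γ s s) ∧
      (∀ s t, pauliString n s * pauliString n t = -(pauliString n t * pauliString n s) →
        Γ s t = 0) ∧
      (∀ s, (Γ s s : ℂ) =
        ((pauliString n s ⊗ₖ (pauliString n s)ᴴ) * ∑ i, (p i : ℂ) • (μ i ⊗ₖ μ i)).trace) := by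
  set Γ := ∑ i, p i • scaledMomentMatrix (pauliString n) (μ i)
  have hΓ (s t) : Γ s t = ∑ i, p i * scaledMomentMatrix (pauliString n) (μ i) s t := by
    simp only [Γ, Matrix.sum_apply, Matrix.smul_apply, smul_eq_mul]
  have hΓpsd : Γ.PosSemidef := posSemidef_sum _ fun i _ =>
    (scaledMomentMatrix_posSemidef (pauliString_isHermitian n) (hpsd i)).smul (hp i)
  refine ⟨Γ, isHermitian_iff_isSymm.mp hΓpsd.isHermitian, hΓpsd, ?_, fun s => ?_,
    fun s t h => ?_, fun s => ?_⟩
  · simp only [hΓ, scaledMomentMatrix_pauliString_zero_zero (htr _), mul_one, hsum]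
  · simp only [hΓ, scaledMomentMatrix_pauliString_zero_right (htr _)]
  · simp only [hΓ, scaledMomentMatrix_eq_zero_of_anticommute (pauliString_isHermitian n)
      (hpsd _).isHermitian h, mul_zero, Finset.sum_const_zero]
  · simp only [hΓ, Complex.ofReal_sum, Complex.ofReal_mul, Matrix.mul_sum, Matrix.mul_smul,
      trace_sum, trace_smul, smul_eq_mul,
      ofReal_scaledMomentMatrix_pauliString_self (hpsd _).isHermitian (htr _)]

/-- Observation 1 (generalized): for a symmetric separable state
`ρ = Σ_i p_i μ_i ⊗ μ_i` there exists a real symmetric PSD moment matrix `Γ` indexed by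
Pauli labels with `Γ 0 0 = 1`, `Γ s 0 = Γ s s`, `Γ s t = 0` for anticommuting pairs, and
diagonal given by the correlations of `ρ`. -/
theorem stmt11 (n : ℕ) (hn : 1 ≤ n) {I : Type*} [Fintype I]
    (p : I → ℝ) (hp : ∀ i, 0 ≤ p i) (hsum : ∑ i, p i = 1)
    (μ : I → Matrix (Fin n → Fin 2) (Fin n → Fin 2) ℂ)
    (hpsd : ∀ i, (μ i).PosSemidef) (htr : ∀ i, (μ i).trace = 1) :
    ∃ Γ : Matrix (Fin n → Fin 4) (Fin n → Fin 4) ℝ,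
      Γ.IsSymm ∧ Γ.PosSemidef ∧
      Γ 0 0 = 1 ∧
      (∀ s, Γ s 0 = Γ s s) ∧
      (∀ s t, pauliString n s * pauliString n t = -(pauliString n t * pauliString n s) →
        Γ s t = 0) ∧
      (∀ s, (Γ s s : ℂ) =
        ((pauliString n s ⊗ₖ (pauliString n s)ᴴ) * ∑ i, (p i : ℂ) • (μ i ⊗ₖ μ i)).trace) :=
  stmt11_general n p hp hsum μ hpsd htr
end

section
/- (Symmetrization of Lovász-feasible points) Let G be a simple graph on a finite vertex set V and let Π be a finite subgroup of the automorphism group of G. If (x, M) is Lovász-feasible for G, then the averaged pair (x̄, M̄), defined by x̄ a = (1/|Π|) Σ_{π ∈ Π} x (π⁻¹ a) and M̄ a b = (1/|Π|) Σ_{π ∈ Π} M (π⁻¹ a) (π⁻¹ b), is again Lovász-feasible for G, is Π-invariant (x̄ (π a) = x̄ a and M̄ (π a) (π b) = M̄ a b for all π ∈ Π), and has the same objective value, Σ_{a ∈ V} M̄ a a = Σ_{a ∈ V} M a a. -/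
/-!
Relabelling by an automorphism conjugates the block matrix by a permutation, so it preserves
feasibility; and since the block matrix depends affinely on `(x, M)` (its corner is the constant
`1`), feasibility is preserved by convex combinations. The group average is such a combination
of relabellings. Its invariance is a reindexing of the sum over the group, and each relabelling
leaves the trace of `M` unchanged.
-/

open Matrix

/-- The `(1 + |V|) × (1 + |V|)` block matrix with top-left entry `1`, first row `xᵀ`,
first column `x`, and lower-right block `M`. -/
def lovaszBlock {V : Type*} (x : V → ℝ) (M : Matrix V V ℝ) :
    Matrix (Option V) (Option V) ℝ :=
  Matrix.of fun a b =>
    match a, b with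
    | none, none => 1
    | none, some j => x j
    | some i, none => x i
    | some i, some j => M i j

/-- A pair `(x, M)` is Lovász-feasible for the adjacency relation `Adj`:
`M a a = x a`, `M a b = 0` on edges, and the block matrix is positive semidefinite. -/
def LovaszFeasible {V : Type*} [Fintype V] (Adj : V → V → Prop)
    (x : V → ℝ) (M : Matrix V V ℝ) : Prop :=
  (∀ a, M a a = x a) ∧ (∀ a b, Adj a b → M a b = 0) ∧ (lovaszBlock x M).PosSemidef


open Finset

lemma lovaszBlock_submatrix_optionMap {V W : Type*} (x : V → ℝ) (M : Matrix V V ℝ)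
    (σ : W → V) :
    (lovaszBlock x M).submatrix (Option.map σ) (Option.map σ) =
      lovaszBlock (x ∘ σ) (M.submatrix σ σ) := by
  ext (_ | i) (_ | j) <;> rfl

lemma lovaszBlock_sum_smul {V ι : Type*} (s : Finset ι) (w : ι → ℝ)
    (hw : ∑ i ∈ s, w i = 1) (x : ι → V → ℝ) (M : ι → Matrix V V ℝ) :
    lovaszBlock (∑ i ∈ s, w i • x i) (∑ i ∈ s, w i • M i) =
      ∑ i ∈ s, w i • lovaszBlock (x i) (M i) := by
  ext (_ | a) (_ | b) <;> simp [lovaszBlock, Matrix.sum_apply, Finset.sum_apply, hw]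

namespace LovaszFeasible

variable {V : Type*} [Fintype V] {Adj : V → V → Prop}

theorem comp {W : Type*} [Fintype W] {AdjW : W → W → Prop} {x : V → ℝ} {M : Matrix V V ℝ}
    (h : LovaszFeasible Adj x M) (σ : W → V) (hσ : ∀ a b, AdjW a b → Adj (σ a) (σ b)) :
    LovaszFeasible AdjW (x ∘ σ) (M.submatrix σ σ) := by
  obtain ⟨hdiag, hedge, hpsd⟩ := h
  refine ⟨fun a => hdiag (σ a), fun a b hab => hedge _ _ (hσ a b hab), ?_⟩
  rw [← lovaszBlock_submatrix_optionMap]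
  exact hpsd.submatrix _

theorem sum_smul {ι : Type*} {s : Finset ι} {w : ι → ℝ} (hw₀ : ∀ i ∈ s, 0 ≤ w i)
    (hw₁ : ∑ i ∈ s, w i = 1) {x : ι → V → ℝ} {M : ι → Matrix V V ℝ}
    (h : ∀ i ∈ s, LovaszFeasible Adj (x i) (M i)) :
    LovaszFeasible Adj (∑ i ∈ s, w i • x i) (∑ i ∈ s, w i • M i) := by
  refine ⟨fun a => ?_, fun a b hab => ?_, ?_⟩
  · simp only [Matrix.sum_apply, Finset.sum_apply, Matrix.smul_apply, Pi.smul_apply]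
    exact sum_congr rfl fun i hi => by rw [(h i hi).1 a]
  · simp only [Matrix.sum_apply, Matrix.smul_apply]
    exact sum_eq_zero fun i hi => by rw [(h i hi).2.1 a b hab, smul_zero]
  · rw [lovaszBlock_sum_smul s w hw₁]
    exact posSemidef_sum s fun i hi => (h i hi).2.2.smul (hw₀ i hi)

end LovaszFeasible

lemma Subgroup.sum_coe_inv_mul {α β : Type*} [Group α] [AddCommMonoid β] (H : Subgroup α)
    [Fintype H] (f : α → β) {g : α} (hg : g ∈ H) :
    ∑ τ : H, f ((τ : α)⁻¹ * g) = ∑ τ : H, f (τ : α)⁻¹ :=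
  Fintype.sum_equiv (Equiv.mulLeft (⟨g, hg⟩ : H)⁻¹) _ _
    fun τ => by simp [_root_.mul_inv_rev]

theorem stmt14_general {V : Type*} [Fintype V] (G : SimpleGraph V)
    (H : Subgroup (Equiv.Perm V)) [Fintype H]
    (hH : ∀ π ∈ H, ∀ a b : V, G.Adj (π a) (π b) ↔ G.Adj a b)
    (x : V → ℝ) (M : Matrix V V ℝ) (hfeas : LovaszFeasible G.Adj x M) :
    LovaszFeasible G.Adj
        (fun a => (1 / (Fintype.card H : ℝ)) * ∑ π : H, x ((π : Equiv.Perm V)⁻¹ a))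
        (Matrix.of fun a b => (1 / (Fintype.card H : ℝ)) *
          ∑ π : H, M ((π : Equiv.Perm V)⁻¹ a) ((π : Equiv.Perm V)⁻¹ b))
    ∧ (∀ π ∈ H, ∀ a : V,
        (1 / (Fintype.card H : ℝ)) * ∑ τ : H, x ((τ : Equiv.Perm V)⁻¹ (π a)) =
          (1 / (Fintype.card H : ℝ)) * ∑ τ : H, x ((τ : Equiv.Perm V)⁻¹ a))
    ∧ (∀ π ∈ H, ∀ a b : V,
        (1 / (Fintype.card H : ℝ)) *
            ∑ τ : H, M ((τ : Equiv.Perm V)⁻¹ (π a)) ((τ : Equiv.Perm V)⁻¹ (π b)) =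
          (1 / (Fintype.card H : ℝ)) *
            ∑ τ : H, M ((τ : Equiv.Perm V)⁻¹ a) ((τ : Equiv.Perm V)⁻¹ b))
    ∧ (∑ a : V, (1 / (Fintype.card H : ℝ)) *
          ∑ π : H, M ((π : Equiv.Perm V)⁻¹ a) ((π : Equiv.Perm V)⁻¹ a)) =
        ∑ a : V, M a a := by
  set c : ℝ := 1 / (Fintype.card H : ℝ)
  have hc : ∑ _π : H, c = 1 := by simp [c]
  have hAdj_inv (π : H) (a b : V) (hab : G.Adj a b) :
      G.Adj ((π : Equiv.Perm V)⁻¹ a) ((π : Equiv.Perm V)⁻¹ b) :=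
    (hH _ (inv_mem π.2) a b).2 hab
  refine ⟨?_, fun π hπ a => ?_, fun π hπ a b => ?_, ?_⟩
  · have havg := LovaszFeasible.sum_smul (s := univ) (fun _ _ => by positivity) hc
      fun π _ => hfeas.comp _ (hAdj_inv π)
    convert havg using 1
    · ext a; simp [mul_sum, c]
    · ext a b; simp [mul_sum, Matrix.sum_apply, c]
  · exact congrArg (c * ·) (H.sum_coe_inv_mul (fun σ => x (σ a)) hπ)
  · exact congrArg (c * ·) (H.sum_coe_inv_mul (fun σ => M (σ a) (σ b)) hπ)
  · rw [← mul_sum, sum_comm]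
    simp only [Equiv.sum_comp _ (fun a => M a a), sum_const, card_univ, nsmul_eq_mul, c]
    field_simp

/-- Symmetrization of Lovász-feasible points: averaging a feasible pair over a finite
group of automorphisms of `G` yields a feasible, invariant pair with the same
objective value. -/
theorem stmt14 {V : Type*} [Fintype V] [DecidableEq V] (G : SimpleGraph V)
    (H : Subgroup (Equiv.Perm V)) [Fintype H]
    (hH : ∀ π ∈ H, ∀ a b : V, G.Adj (π a) (π b) ↔ G.Adj a b)
    (x : V → ℝ) (M : Matrix V V ℝ) (hfeas : LovaszFeasible G.Adj x M) :
    LovaszFeasible G.Adj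
        (fun a => (1 / (Fintype.card H : ℝ)) * ∑ π : H, x ((π : Equiv.Perm V)⁻¹ a))
        (Matrix.of fun a b => (1 / (Fintype.card H : ℝ)) *
          ∑ π : H, M ((π : Equiv.Perm V)⁻¹ a) ((π : Equiv.Perm V)⁻¹ b))
    ∧ (∀ π ∈ H, ∀ a : V,
        (1 / (Fintype.card H : ℝ)) * ∑ τ : H, x ((τ : Equiv.Perm V)⁻¹ (π a)) =
          (1 / (Fintype.card H : ℝ)) * ∑ τ : H, x ((τ : Equiv.Perm V)⁻¹ a))
    ∧ (∀ π ∈ H, ∀ a b : V,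
        (1 / (Fintype.card H : ℝ)) *
            ∑ τ : H, M ((τ : Equiv.Perm V)⁻¹ (π a)) ((τ : Equiv.Perm V)⁻¹ (π b)) =
          (1 / (Fintype.card H : ℝ)) *
            ∑ τ : H, M ((τ : Equiv.Perm V)⁻¹ a) ((τ : Equiv.Perm V)⁻¹ b))
    ∧ (∑ a : V, (1 / (Fintype.card H : ℝ)) *
          ∑ π : H, M ((π : Equiv.Perm V)⁻¹ a) ((π : Equiv.Perm V)⁻¹ a)) =
        ∑ a : V, M a a :=
  stmt14_general G H hH x M hfeas
end

section
/- (Observation 3) Define w : ℕ → ℝ by w 0 = 1, w 1 = w 2 = w 3 = 0, w 4 = 1/81, w 5 = 2/243, w 6 = 4/729, w 7 = 22/2187. Let G₄₊ be the graph whose vertices are the labels s : Fin 7 → Fin 4 with wt s ≥ 4, two vertices s, t being adjacent iff E_s and E_t anticommute. Suppose there exists a real symmetric positive semidefinite matrix Γ indexed by all labels s : Fin 7 → Fin 4 with Γ 0 0 = 1, Γ s 0 = Γ s s for all s, Γ s t = 0 whenever E_s and E_t anticommute, and Γ s s = w (wt s) for all s. Then there exists a Lovász-feasible pair (x, M) for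 G₄₊ with 1 + Σ_{s vertex of G₄₊} M s s = 2^7. -/
open Matrix Kronecker ComplexOrder

open Matrix

/-- The diagonal weights derived from the `Φ_E8` correlations. -/
noncomputable def wFn : ℕ → ℝ
  | 0 => 1
  | 4 => 1 / 81
  | 5 => 2 / 243
  | 6 => 4 / 729
  | 7 => 22 / 2187
  | _ => 0

/-- Anticommutativity of two Pauli strings on seven qubits. -/
def AC (s t : Fin 7 → Fin 4) : Prop :=
  pauliString 7 s * pauliString 7 t = -(pauliString 7 t * pauliString 7 s)

/-- Interpolation coefficients. -/
noncomputable def cjAux : Fin 8 → ℝ :=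
  ![703/2520, -129/80, 481/120, -803/144, 113/24, -581/240, 253/360, -149/1680]

/-- Interpolation nodes. -/
noncomputable def xvAux : Fin 8 → ℝ :=
  ![0, 1/3, 2/3, 1, 4/3, 5/3, 2, 7/3]

lemma wt_le_seven (s : Fin 7 → Fin 4) : wt s ≤ 7 := by
  classical
  calc wt s ≤ (Finset.univ : Finset (Fin 7)).card := Finset.card_filter_le _ _
  _ = 7 := by simp

lemma genfun (x : ℝ) : ∑ s : Fin 7 → Fin 4, x ^ wt s = (1 + 3 * x) ^ 7 := by
  classical
  have h1 : ∀ s : Fin 7 → Fin 4, x ^ wt s = ∏ k, (if s k ≠ 0 then x else 1) := by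
    intro s
    rw [wt, Finset.card_filter, ← Finset.prod_pow_eq_pow_sum]
    refine Finset.prod_congr rfl fun k _ => ?_
    split_ifs <;> simp
  simp_rw [h1]
  rw [← Fintype.prod_sum (fun (_ : Fin 7) (a : Fin 4) => if a ≠ 0 then x else 1)]
  have h2 : (∑ a : Fin 4, if a ≠ 0 then x else 1) = 1 + 3 * x := by
    rw [Fin.sum_univ_four, if_neg (by decide), if_pos (by decide), if_pos (by decide),
      if_pos (by decide)]
    ring
  rw [Finset.prod_congr rfl fun k _ => h2, Finset.prod_const]
  simp

lemma cjAux0' : cjAux 0 = 703/2520 := rfl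
lemma cjAux1' : cjAux 1 = -129/80 := rfl
lemma cjAux2' : cjAux 2 = 481/120 := rfl
lemma cjAux3' : cjAux 3 = -803/144 := rfl
lemma cjAux4' : cjAux 4 = 113/24 := rfl
lemma cjAux5' : cjAux 5 = -581/240 := rfl
lemma cjAux6' : cjAux 6 = 253/360 := rfl
lemma cjAux7' : cjAux 7 = -149/1680 := rfl
lemma xvAux0' : xvAux 0 = 0 := rfl
lemma xvAux1' : xvAux 1 = 1/3 := rfl
lemma xvAux2' : xvAux 2 = 2/3 := rfl
lemma xvAux3' : xvAux 3 = 1 := rfl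
lemma xvAux4' : xvAux 4 = 4/3 := rfl
lemma xvAux5' : xvAux 5 = 5/3 := rfl
lemma xvAux6' : xvAux 6 = 2 := rfl
lemma xvAux7' : xvAux 7 = 7/3 := rfl

lemma cjAux5 : cjAux 5 = -581/240 := rfl
lemma cjAux6 : cjAux 6 = 253/360 := rfl
lemma cjAux7 : cjAux 7 = -149/1680 := rfl
lemma xvAux5 : xvAux 5 = 5/3 := rfl
lemma xvAux6 : xvAux 6 = 2 := rfl
lemma xvAux7 : xvAux 7 = 7/3 := rfl

lemma interp (k : ℕ) (hk : k ≤ 7) :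
    (if 4 ≤ k then wFn k else 0) = ∑ j : Fin 8, cjAux j * xvAux j ^ k := by
  interval_cases k <;>
    norm_num [wFn, Fin.sum_univ_eight, cjAux0', cjAux1', cjAux2', cjAux3', cjAux4', cjAux5', cjAux6', cjAux7', xvAux0', xvAux1', xvAux2', xvAux3', xvAux4', xvAux5', xvAux6', xvAux7']

lemma total_sum :
    ∑ s : {s : Fin 7 → Fin 4 // 4 ≤ wt s}, wFn (wt s.1) = 127 := by
  classical
  have h1 : ∑ s : {s : Fin 7 → Fin 4 // 4 ≤ wt s}, wFn (wt s.1)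
      = ∑ s ∈ Finset.univ.filter (fun s : Fin 7 → Fin 4 => 4 ≤ wt s), wFn (wt s) := by
    symm
    apply Finset.sum_subtype
    intro x; simp
  rw [h1, Finset.sum_filter]
  have h2 : ∀ s : Fin 7 → Fin 4,
      (if 4 ≤ wt s then wFn (wt s) else 0) = ∑ j : Fin 8, cjAux j * xvAux j ^ wt s :=
    fun s => interp (wt s) (wt_le_seven s)
  simp_rw [h2]
  rw [Finset.sum_comm]
  have h3 : ∀ j : Fin 8, ∑ s : Fin 7 → Fin 4, cjAux j * xvAux j ^ wt s
      = cjAux j * (1 + 3 * xvAux j) ^ 7 := by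
    intro j
    rw [← Finset.mul_sum, genfun]
  rw [Finset.sum_congr rfl fun j _ => h3 j]
  norm_num [Fin.sum_univ_eight, cjAux0', cjAux1', cjAux2', cjAux3', cjAux4', cjAux5', cjAux6', cjAux7', xvAux0', xvAux1', xvAux2', xvAux3', xvAux4', xvAux5', xvAux6', xvAux7']

/-- Observation 3: a feasible moment matrix with the `Φ_E8` diagonal yields a
Lovász-feasible pair for the anticommutativity graph `G₄₊` on weight-`≥ 4` Pauli
labels with `1 + Σ M s s = 2^7`. -/
theorem stmt16 (Γ : Matrix (Fin 7 → Fin 4) (Fin 7 → Fin 4) ℝ)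
    (hsym : Γ.IsSymm) (hpsd : Γ.PosSemidef)
    (h00 : Γ 0 0 = 1) (hd : ∀ s, Γ s 0 = Γ s s)
    (hac : ∀ s t, AC s t → Γ s t = 0)
    (hw : ∀ s, Γ s s = wFn (wt s)) :
    ∃ (x : {s : Fin 7 → Fin 4 // 4 ≤ wt s} → ℝ)
      (M : Matrix {s : Fin 7 → Fin 4 // 4 ≤ wt s} {s : Fin 7 → Fin 4 // 4 ≤ wt s} ℝ),
      LovaszFeasible (fun s t => AC s.1 t.1) x M ∧
      1 + ∑ s : {s : Fin 7 → Fin 4 // 4 ≤ wt s}, M s s = 2 ^ 7 := by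
  classical
  refine ⟨fun s => Γ s.1 s.1, fun s t => Γ s.1 t.1,
    ⟨fun a => rfl, fun a b h => hac _ _ h, ?_⟩, ?_⟩
  · have key : lovaszBlock (fun s : {s : Fin 7 → Fin 4 // 4 ≤ wt s} => Γ s.1 s.1)
        (fun s t : {s : Fin 7 → Fin 4 // 4 ≤ wt s} => Γ s.1 t.1)
        = Γ.submatrix (fun o => Option.elim o 0 Subtype.val)
            (fun o => Option.elim o 0 Subtype.val) := by
      ext a b
      match a, b with
      | none, none => simpa [lovaszBlock, Matrix.submatrix] using h00.symm
      | none, some j =>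
        have : Γ 0 j.1 = Γ j.1 0 := hsym.apply j.1 0
        simp [lovaszBlock, Matrix.submatrix, this, hd j.1]
      | some i, none => simp [lovaszBlock, Matrix.submatrix, hd i.1]
      | some i, some j => simp [lovaszBlock, Matrix.submatrix]
    rw [key]
    exact hpsd.submatrix _
  · have : ∀ s : {s : Fin 7 → Fin 4 // 4 ≤ wt s}, Γ s.1 s.1 = wFn (wt s.1) :=
      fun s => hw s.1
    rw [Finset.sum_congr rfl fun s _ => this s, total_sum]
    norm_num
end

section
/- (Coarse-grained diagonal formula, Eq. (B13)) Let n ≥ 1 and let ρ be a complex matrix on ℂ^{2^n} ⊗ ℂ^{2^n} (indexed by ((Fin n → Fin 2) × (Fin n → Fin 2)) pairs) such that for every subset T ⊆ Fin n, tr(π_T · ρ) = 1 / min(2^{|T|}, 2^{n − |T|}), where π_T is the partial swap defined entrywise by π_T (x,y) (x',y') = ∏_{k ∈ T} [x k = y' k]·[y k = x' k] · ∏_{k ∉ T} [x k = x' k]·[y k = y' k]. Then for every i with 0 ≤ i ≤ n, Σ_{s : Fin n → Fin 4, wt s = i} tr((E_s ⊗ E_sᴴ) · ρ) = Σ_{j=0}^{i}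 (n choose i) · (i choose j) · (−1)^{i−j} · 2^j / min(2^j, 2^{n−j}). -/
open Matrix Kronecker ComplexOrder

/-- The partial swap `π_T` swapping the paired factors in `T` and acting as the
identity elsewhere. -/
def pSwap (n : ℕ) (T : Finset (Fin n)) :
    Matrix ((Fin n → Fin 2) × (Fin n → Fin 2)) ((Fin n → Fin 2) × (Fin n → Fin 2)) ℂ :=
  Matrix.of fun p q =>
    ∏ k : Fin n,
      if k ∈ T then (if p.1 k = q.2 k ∧ p.2 k = q.1 k then 1 else 0)
      else (if p.1 k = q.1 k ∧ p.2 k = q.2 k then 1 else 0)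

/-!
Per tensor factor, the Pauli matrices satisfy the completeness relation
`∑_t σ_t ⊗ σ_tᴴ = 2·SWAP` (entrywise, with the second factor transposed), so summing over the
non-identity labels gives `2·SWAP - I`. Summing `E_s ⊗ E_sᴴ` over all `s` with support `T`
therefore factorizes as `∏_{k ∈ T} (2·SWAP_k - I_k)`, which expands into
`∑_{S ⊆ T} 2^{|S|} (-1)^{|T|-|S|} π_S`. By hypothesis `tr(π_S ρ)` depends only on `|S|`, and
counting the pairs `S ⊆ T` with `|T| = i`, `|S| = j` gives the coefficient
`(n choose i)(i choose j)`.
-/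

open Finset

theorem prod_ite_mem_eq_prod_mul_prod_compl {ι M : Type*} [Fintype ι] [DecidableEq ι]
    [CommMonoid M] (S : Finset ι) (a b : ι → M) :
    ∏ k, (if k ∈ S then a k else b k) = (∏ k ∈ S, a k) * ∏ k ∈ Sᶜ, b k := by
  rw [prod_ite, filter_mem_eq_inter, univ_inter, ← compl_filter, filter_mem_eq_inter, univ_inter]

theorem prod_ite_mem_sub_eq_sum_powerset {ι R : Type*} [Fintype ι] [DecidableEq ι] [CommRing R]
    (T : Finset ι) (c : R) (a b : ι → R) :
    ∏ k, (if k ∈ T then c * a k - b k else b k) =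
      ∑ S ∈ T.powerset, c ^ #S * (-1) ^ (#T - #S) * ∏ k, (if k ∈ S then a k else b k) := by
  simp_rw [prod_ite_mem_eq_prod_mul_prod_compl, sub_eq_add_neg, prod_add, sum_mul]
  refine sum_congr rfl fun S hS => ?_
  have hST : S ⊆ T := mem_powerset.mp hS
  have hcompl : ∏ k ∈ Sᶜ, b k = (∏ k ∈ T \ S, b k) * ∏ k ∈ Tᶜ, b k := by
    rw [← prod_sdiff (compl_subset_compl.mpr hST), compl_sdiff_compl]
  rw [hcompl, prod_mul_distrib, prod_const, prod_neg, card_sdiff_of_subset hST]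
  ring

theorem sum_powersetCard_sum_powerset_card {α M : Type*} [AddCommMonoid M] (s : Finset α) (i : ℕ)
    (g : ℕ → M) :
    ∑ T ∈ s.powersetCard i, ∑ S ∈ T.powerset, g #S =
      (#s).choose i • ∑ j ∈ range (i + 1), i.choose j • g j := by
  rw [← card_powersetCard, ← sum_const]
  refine sum_congr rfl fun T hT => ?_
  rw [sum_powerset_apply_card, (mem_powersetCard.mp hT).2]

theorem pauli_zero_mul_star (a a' b b' : Fin 2) :
    pauli 0 a a' * star (pauli 0 b' b) = if a = a' ∧ b = b' then 1 else 0 := by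
  fin_cases a <;> fin_cases b <;> fin_cases a' <;> fin_cases b' <;> simp [pauli]

theorem sum_pauli_mul_star (a a' b b' : Fin 2) :
    ∑ t, pauli t a a' * star (pauli t b' b) = 2 * if a = b' ∧ b = a' then 1 else 0 := by
  fin_cases a <;> fin_cases b <;> fin_cases a' <;> fin_cases b' <;>
    simp [Fin.sum_univ_four, pauli, Complex.ext_iff] <;> norm_num

theorem sum_compl_zero_pauli_mul_star (a a' b b' : Fin 2) :
    ∑ t ∈ {0}ᶜ, pauli t a a' * star (pauli t b' b) =
      2 * (if a = b' ∧ b = a' then 1 else 0) - if a = a' ∧ b = b' then 1 else 0 := by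
  rw [← sum_pauli_mul_star, ← sum_compl_add_sum {0}, sum_singleton, pauli_zero_mul_star,
    add_sub_cancel_right]

def pauliSupport {n : ℕ} (s : Fin n → Fin 4) : Finset (Fin n) :=
  univ.filter fun k => s k ≠ 0

theorem filter_pauliSupport_eq (n : ℕ) (T : Finset (Fin n)) :
    univ.filter (fun s : Fin n → Fin 4 => pauliSupport s = T) =
      Fintype.piFinset fun k => if k ∈ T then {0}ᶜ else {0} := by
  ext s
  simp only [pauliSupport, mem_filter, mem_univ, true_and, Fintype.mem_piFinset, Finset.ext_iff]
  refine forall_congr' fun k => ?_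
  split_ifs <;> simp [*]

theorem pauliString_kronecker_conjTranspose_apply (n : ℕ) (s : Fin n → Fin 4)
    (p q : (Fin n → Fin 2) × (Fin n → Fin 2)) :
    (pauliString n s ⊗ₖ (pauliString n s)ᴴ) p q =
      ∏ k, pauli (s k) (p.1 k) (q.1 k) * star (pauli (s k) (q.2 k) (p.2 k)) := by
  simp [kroneckerMap_apply, pauliString, conjTranspose_apply, prod_mul_distrib]

theorem sum_pauliSupport_eq_kronecker (n : ℕ) (T : Finset (Fin n)) :
    ∑ s ∈ univ.filter (fun s : Fin n → Fin 4 => pauliSupport s = T),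
        pauliString n s ⊗ₖ (pauliString n s)ᴴ =
      ∑ S ∈ T.powerset, ((2 : ℂ) ^ #S * (-1) ^ (#T - #S)) • pSwap n S := by
  ext p q
  simp only [Matrix.sum_apply, Matrix.smul_apply, smul_eq_mul,
    pauliString_kronecker_conjTranspose_apply, filter_pauliSupport_eq, pSwap, of_apply]
  rw [← prod_univ_sum (fun k => if k ∈ T then {0}ᶜ else {0})
    fun k t => pauli t (p.1 k) (q.1 k) * star (pauli t (q.2 k) (p.2 k))]
  have hsite : ∀ k, ∑ t ∈ (if k ∈ T then {0}ᶜ else {0}),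
      pauli t (p.1 k) (q.1 k) * star (pauli t (q.2 k) (p.2 k)) =
      if k ∈ T then 2 * (if p.1 k = q.2 k ∧ p.2 k = q.1 k then 1 else 0) -
        (if p.1 k = q.1 k ∧ p.2 k = q.2 k then 1 else 0)
      else if p.1 k = q.1 k ∧ p.2 k = q.2 k then 1 else 0 := by
    intro k
    by_cases hk : k ∈ T
    · simp only [hk, if_true]
      exact sum_compl_zero_pauli_mul_star ..
    · simp only [hk, if_false, sum_singleton]
      exact pauli_zero_mul_star ..
  simp_rw [hsite]
  exact prod_ite_mem_sub_eq_sum_powerset ..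

theorem sum_wt_eq_kronecker (n i : ℕ) :
    ∑ s ∈ univ.filter (fun s : Fin n → Fin 4 => wt s = i),
        pauliString n s ⊗ₖ (pauliString n s)ᴴ =
      ∑ T ∈ univ.powersetCard i, ∑ S ∈ T.powerset,
        ((2 : ℂ) ^ #S * (-1) ^ (i - #S)) • pSwap n S := by
  rw [← sum_fiberwise_of_maps_to (s := univ.filter (wt · = i)) (g := pauliSupport)
    (t := univ.powersetCard i)
    fun s hs => mem_powersetCard_univ.mpr (mem_filter.mp hs).2]
  refine sum_congr rfl fun T hT => ?_
  have hcard : #T = i := mem_powersetCard_univ.mp hT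
  rw [← hcard, ← sum_pauliSupport_eq_kronecker, filter_filter]
  refine sum_congr (filter_congr fun s _ => ?_) fun _ _ => rfl
  exact and_iff_right_of_imp fun h => h ▸ rfl

theorem stmt17_general (n : ℕ)
    (ρ : Matrix ((Fin n → Fin 2) × (Fin n → Fin 2))
      ((Fin n → Fin 2) × (Fin n → Fin 2)) ℂ)
    (hswap : ∀ T : Finset (Fin n),
      (pSwap n T * ρ).trace = (((min (2 ^ T.card) (2 ^ (n - T.card)) : ℕ) : ℂ))⁻¹) :
    ∀ i ≤ n,
      ∑ s ∈ Finset.univ.filter (fun s : Fin n → Fin 4 => wt s = i),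
          ((pauliString n s ⊗ₖ (pauliString n s)ᴴ) * ρ).trace =
        ∑ j ∈ Finset.range (i + 1),
          (n.choose i : ℂ) * (i.choose j : ℂ) * (-1 : ℂ) ^ (i - j) * 2 ^ j /
            ((min (2 ^ j) (2 ^ (n - j)) : ℕ) : ℂ) := by
  intro i _
  calc _ = ((∑ s ∈ univ.filter (fun s : Fin n → Fin 4 => wt s = i),
          pauliString n s ⊗ₖ (pauliString n s)ᴴ) * ρ).trace := by
        rw [sum_mul, trace_sum]
    _ = ∑ T ∈ (univ : Finset (Fin n)).powersetCard i, ∑ S ∈ T.powerset,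
          (2 : ℂ) ^ #S * (-1) ^ (i - #S) * (pSwap n S * ρ).trace := by
        simp only [sum_wt_eq_kronecker, sum_mul, trace_sum, smul_mul_assoc, trace_smul,
          smul_eq_mul]
    _ = ∑ T ∈ (univ : Finset (Fin n)).powersetCard i, ∑ S ∈ T.powerset,
          (2 : ℂ) ^ #S * (-1) ^ (i - #S) * (((min (2 ^ #S) (2 ^ (n - #S)) : ℕ) : ℂ))⁻¹ := by
        simp only [hswap]
    _ = _ := by
        rw [sum_powersetCard_sum_powerset_card univ i
            fun j => (2 : ℂ) ^ j * (-1) ^ (i - j) * (((min (2 ^ j) (2 ^ (n - j)) : ℕ) : ℂ))⁻¹,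
          card_univ, Fintype.card_fin, smul_sum]
        refine sum_congr rfl fun j _ => ?_
        simp only [nsmul_eq_mul]
        ring

/-- Coarse-grained diagonal formula: if `tr(π_T ρ) = 1/min(2^{|T|}, 2^{n-|T|})` for
all `T`, then the weight-`i` Pauli correlations of `ρ` sum to
`Σ_j (n choose i)(i choose j)(-1)^{i-j} 2^j / min(2^j, 2^{n-j})`. -/
theorem stmt17 (n : ℕ) (hn : 1 ≤ n)
    (ρ : Matrix ((Fin n → Fin 2) × (Fin n → Fin 2))
      ((Fin n → Fin 2) × (Fin n → Fin 2)) ℂ)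
    (hswap : ∀ T : Finset (Fin n),
      (pSwap n T * ρ).trace = (((min (2 ^ T.card) (2 ^ (n - T.card)) : ℕ) : ℂ))⁻¹) :
    ∀ i ≤ n,
      ∑ s ∈ Finset.univ.filter (fun s : Fin n → Fin 4 => wt s = i),
          ((pauliString n s ⊗ₖ (pauliString n s)ᴴ) * ρ).trace =
        ∑ j ∈ Finset.range (i + 1),
          (n.choose i : ℂ) * (i.choose j : ℂ) * (-1 : ℂ) ^ (i - j) * 2 ^ j /
            ((min (2 ^ j) (2 ^ (n - j)) : ℕ) : ℂ) :=
  stmt17_general n ρ hswap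
end

section
/- (Weight-dependence of Pauli correlations under symmetry) Let n ≥ 1 and let ρ be a complex matrix on ℂ^{2^n} ⊗ ℂ^{2^n} (indexed by ((Fin n → Fin 2) × (Fin n → Fin 2)) pairs) satisfying: (i) for every permutation σ of Fin n, (P_σ ⊗ P_σ) · ρ · (P_σ ⊗ P_σ)ᴴ = ρ, where P_σ is the permutation matrix on ℂ^{2^n} given by P_σ x y = [x = y ∘ σ]; and (ii) for every family U : Fin n → Matrix (Fin 2) (Fin 2) ℂ of unitary matrices, (V ⊗ V) · ρ · (V ⊗ V)ᴴ = ρ, where V is the matrix on ℂ^{2^n} with V x y = ∏_k (U k) (x k) (y k). Then tr((E_s ⊗ E_sᴴ) · ρ) = tr((E_t ⊗ E_tᴴ) · ρ) whenever wt s = wt t. -/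
open Matrix Kronecker ComplexOrder

/-- The permutation matrix `P_σ x y = [x = y ∘ σ]` on `ℂ^{2^n}`. -/
def permMat (n : ℕ) (σ : Equiv.Perm (Fin n)) :
    Matrix (Fin n → Fin 2) (Fin n → Fin 2) ℂ :=
  Matrix.of fun x y => if x = y ∘ σ then 1 else 0

/-- The local matrix `V x y = ∏_k (U k) (x k) (y k)` on `ℂ^{2^n}`. -/
def locMat (n : ℕ) (U : Fin n → Matrix (Fin 2) (Fin 2) ℂ) :
    Matrix (Fin n → Fin 2) (Fin n → Fin 2) ℂ :=
  Matrix.of fun x y => ∏ k, U k (x k) (y k)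

/-! If `A ⊗ A` fixes `ρ`, cyclicity of the trace gives
`tr((E ⊗ Eᴴ) ρ) = tr((F ⊗ Fᴴ) ρ)` with `F = Aᴴ E A`. A Hadamard gate conjugates `σ₁` to `σ₃`
and, after a phase gate, `σ₂` to `σ₃`, so one local unitary turns `E_s` into the string carrying
`σ₃` exactly on the support of `s`. Such strings with supports of equal size differ by a
permutation of the qubits, which is the other symmetry of `ρ`. -/

section Conjugation

variable {m : Type*} [Fintype m]

lemma trace_mul_eq_trace_conj_mul {ρ W : Matrix m m ℂ} (hW : W * ρ * Wᴴ = ρ)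
    (M : Matrix m m ℂ) : (M * ρ).trace = (Wᴴ * M * W * ρ).trace := by
  conv_lhs => rw [← hW]
  rw [← Matrix.mul_assoc, trace_mul_comm]
  simp only [Matrix.mul_assoc]

lemma trace_kronecker_conjTranspose_mul_eq_of_conj {ρ : Matrix (m × m) (m × m) ℂ}
    {A E F : Matrix m m ℂ} (hρ : (A ⊗ₖ A) * ρ * (A ⊗ₖ A)ᴴ = ρ) (hEF : Aᴴ * E * A = F) :
    ((E ⊗ₖ Eᴴ) * ρ).trace = ((F ⊗ₖ Fᴴ) * ρ).trace := by
  have hEF' : Aᴴ * Eᴴ * A = Fᴴ := by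
    rw [← hEF, conjTranspose_mul, conjTranspose_mul, conjTranspose_conjTranspose,
      Matrix.mul_assoc]
  rw [trace_mul_eq_trace_conj_mul hρ, conjTranspose_kronecker, ← mul_kronecker_mul,
    ← mul_kronecker_mul, hEF, hEF']

end Conjugation

section LocalMatrices

variable {n : ℕ}

lemma locMat_mul (U V : Fin n → Matrix (Fin 2) (Fin 2) ℂ) :
    locMat n U * locMat n V = locMat n (fun k => U k * V k) := by
  ext x y
  simp only [locMat, mul_apply, of_apply, Fintype.prod_sum, Finset.prod_mul_distrib]

lemma conjTranspose_locMat (U : Fin n → Matrix (Fin 2) (Fin 2) ℂ) :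
    (locMat n U)ᴴ = locMat n (fun k => (U k)ᴴ) := by
  ext x y
  simp [locMat, conjTranspose_apply]

lemma conjTranspose_locMat_mul_mul (U A : Fin n → Matrix (Fin 2) (Fin 2) ℂ) :
    (locMat n U)ᴴ * locMat n A * locMat n U = locMat n (fun k => (U k)ᴴ * A k * U k) := by
  rw [conjTranspose_locMat, locMat_mul, locMat_mul]

lemma conjTranspose_permMat_mul_mul_permMat_apply (σ : Equiv.Perm (Fin n))
    (M : Matrix (Fin n → Fin 2) (Fin n → Fin 2) ℂ) (x y : Fin n → Fin 2) :
    ((permMat n σ)ᴴ * M * permMat n σ) x y = M (x ∘ σ) (y ∘ σ) := by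
  simp [permMat, mul_apply, conjTranspose_apply, apply_ite (star : ℂ → ℂ)]

lemma conjTranspose_permMat_mul_locMat_comp_mul (σ : Equiv.Perm (Fin n))
    (U : Fin n → Matrix (Fin 2) (Fin 2) ℂ) :
    (permMat n σ)ᴴ * locMat n (U ∘ σ) * permMat n σ = locMat n U := by
  ext x y
  rw [conjTranspose_permMat_mul_mul_permMat_apply]
  exact Equiv.prod_comp σ fun k => U k (x k) (y k)

end LocalMatrices

def collapseToZ (a : Fin 4) : Fin 4 := if a = 0 then 0 else 3

/-- A Hadamard gate up to the phase `e^{iπ/4}`, which keeps its entries rational in `i`. -/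
noncomputable def hadamardPhase : Matrix (Fin 2) (Fin 2) ℂ :=
  let ω : ℂ := (1 + Complex.I) / 2
  !![ω, ω; ω, -ω]

def phaseGate : Matrix (Fin 2) (Fin 2) ℂ := !![1, 0; 0, Complex.I]

lemma exists_unitary_conj_pauli_eq (a : Fin 4) :
    ∃ U : Matrix (Fin 2) (Fin 2) ℂ, U * Uᴴ = 1 ∧ Uᴴ * pauli a * U = pauli (collapseToZ a) := by
  refine ⟨![1, hadamardPhase, phaseGate * hadamardPhase, 1] a, ?_, ?_⟩ <;>
    fin_cases a <;> ext i j <;> fin_cases i <;> fin_cases j <;>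
    simp [hadamardPhase, phaseGate, collapseToZ, pauli, mul_apply, Fin.sum_univ_two,
      Complex.ext_iff, map_div₀, map_ofNat, Complex.div_ofNat_re, Complex.div_ofNat_im] <;>
    norm_num

section Correlations

variable {n : ℕ} (ρ : Matrix ((Fin n → Fin 2) × (Fin n → Fin 2))
  ((Fin n → Fin 2) × (Fin n → Fin 2)) ℂ)

def pauliCorrelation (s : Fin n → Fin 4) : ℂ :=
  ((pauliString n s ⊗ₖ (pauliString n s)ᴴ) * ρ).trace

variable {ρ}

lemma pauliCorrelation_comp_perm {σ : Equiv.Perm (Fin n)}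
    (hσ : (permMat n σ ⊗ₖ permMat n σ) * ρ * (permMat n σ ⊗ₖ permMat n σ)ᴴ = ρ)
    (u : Fin n → Fin 4) : pauliCorrelation ρ (u ∘ σ) = pauliCorrelation ρ u :=
  trace_kronecker_conjTranspose_mul_eq_of_conj hσ
    (conjTranspose_permMat_mul_locMat_comp_mul σ (pauli ∘ u))

lemma pauliCorrelation_collapseToZ_comp
    (hloc : ∀ U : Fin n → Matrix (Fin 2) (Fin 2) ℂ, (∀ k, U k * (U k)ᴴ = 1) →
      (locMat n U ⊗ₖ locMat n U) * ρ * (locMat n U ⊗ₖ locMat n U)ᴴ = ρ)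
    (u : Fin n → Fin 4) : pauliCorrelation ρ (collapseToZ ∘ u) = pauliCorrelation ρ u := by
  choose U hU hconj using fun k => exists_unitary_conj_pauli_eq (u k)
  refine (trace_kronecker_conjTranspose_mul_eq_of_conj (hloc U hU) ?_).symm
  exact (conjTranspose_locMat_mul_mul U (pauli ∘ u)).trans (congrArg (locMat n) (funext hconj))

end Correlations

lemma exists_perm_collapseToZ_comp_eq {n : ℕ} {s t : Fin n → Fin 4} (hwt : wt s = wt t) :
    ∃ σ : Equiv.Perm (Fin n), collapseToZ ∘ s ∘ σ = collapseToZ ∘ t := by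
  obtain ⟨σ, hσ⟩ := Equiv.Perm.exists_map_finset_eq _ _ hwt.symm
  refine ⟨σ, funext fun k => ?_⟩
  have hk : s (σ k) ≠ 0 ↔ t k ≠ 0 := by
    simpa using (Finset.ext_iff.mp hσ (σ k)).symm
  simp only [Function.comp_apply, collapseToZ]
  by_cases h : t k = 0 <;> simp_all

theorem stmt18_general (n : ℕ)
    (ρ : Matrix ((Fin n → Fin 2) × (Fin n → Fin 2))
      ((Fin n → Fin 2) × (Fin n → Fin 2)) ℂ)
    (hperm : ∀ σ : Equiv.Perm (Fin n),
      (permMat n σ ⊗ₖ permMat n σ) * ρ * (permMat n σ ⊗ₖ permMat n σ)ᴴ = ρ)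
    (hloc : ∀ U : Fin n → Matrix (Fin 2) (Fin 2) ℂ, (∀ k, U k * (U k)ᴴ = 1) →
      (locMat n U ⊗ₖ locMat n U) * ρ * (locMat n U ⊗ₖ locMat n U)ᴴ = ρ)
    (s t : Fin n → Fin 4) (hwt : wt s = wt t) :
    ((pauliString n s ⊗ₖ (pauliString n s)ᴴ) * ρ).trace =
      ((pauliString n t ⊗ₖ (pauliString n t)ᴴ) * ρ).trace := by
  obtain ⟨σ, hσ⟩ := exists_perm_collapseToZ_comp_eq hwt
  calc pauliCorrelation ρ s
      = pauliCorrelation ρ (collapseToZ ∘ s) := (pauliCorrelation_collapseToZ_comp hloc s).symm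
    _ = pauliCorrelation ρ (collapseToZ ∘ s ∘ σ) :=
        (pauliCorrelation_comp_perm (hperm σ) (collapseToZ ∘ s)).symm
    _ = pauliCorrelation ρ (collapseToZ ∘ t) := by rw [hσ]
    _ = pauliCorrelation ρ t := pauliCorrelation_collapseToZ_comp hloc t

/-- Weight-dependence of Pauli correlations under permutation and local unitary
symmetry of `ρ`. -/
theorem stmt18 (n : ℕ) (hn : 1 ≤ n)
    (ρ : Matrix ((Fin n → Fin 2) × (Fin n → Fin 2))
      ((Fin n → Fin 2) × (Fin n → Fin 2)) ℂ)
    (hperm : ∀ σ : Equiv.Perm (Fin n),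
      (permMat n σ ⊗ₖ permMat n σ) * ρ * (permMat n σ ⊗ₖ permMat n σ)ᴴ = ρ)
    (hloc : ∀ U : Fin n → Matrix (Fin 2) (Fin 2) ℂ, (∀ k, U k * (U k)ᴴ = 1) →
      (locMat n U ⊗ₖ locMat n U) * ρ * (locMat n U ⊗ₖ locMat n U)ᴴ = ρ)
    (s t : Fin n → Fin 4) (hwt : wt s = wt t) :
    ((pauliString n s ⊗ₖ (pauliString n s)ᴴ) * ρ).trace =
      ((pauliString n t ⊗ₖ (pauliString n t)ᴴ) * ρ).trace :=
  stmt18_general n ρ hperm hloc s t hwt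
end

section
/- (Total Pauli correlation equals swap expectation) For every n ≥ 1 and every complex matrix ρ on ℂ^{2^n} ⊗ ℂ^{2^n} (indexed by ((Fin n → Fin 2) × (Fin n → Fin 2)) pairs), Σ_{s : Fin n → Fin 4} tr((E_s ⊗ E_sᴴ) · ρ) = 2^n · tr(S · ρ), where S is the swap of the two 2^n-dimensional factors. -/
open Matrix Kronecker ComplexOrder

lemma pauli_sum (a b c d : Fin 2) :
    ∑ i : Fin 4, pauli i a b * (starRingEnd ℂ) (pauli i c d) =
      if a = c ∧ d = b then 2 else 0 := by
  fin_cases a <;> fin_cases b <;> fin_cases c <;> fin_cases d <;>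
    simp [pauli, Fin.sum_univ_four] <;> ring

lemma key (n : ℕ) :
    ∑ s : Fin n → Fin 4, (pauliString n s ⊗ₖ (pauliString n s)ᴴ) =
      (2 : ℂ) ^ n • swapN n := by
  ext ⟨x, y⟩ ⟨x', y'⟩
  simp only [Matrix.sum_apply, Matrix.kroneckerMap_apply, Matrix.conjTranspose_apply,
    pauliString, Matrix.of_apply, Matrix.smul_apply, swapN, smul_eq_mul]
  have : ∀ s : Fin n → Fin 4,
      (∏ k, pauli (s k) (x k) (x' k)) * star (∏ k, pauli (s k) (y' k) (y k)) =
        ∏ k, pauli (s k) (x k) (x' k) * (starRingEnd ℂ) (pauli (s k) (y' k) (y k)) := by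
    intro s
    rw [Finset.prod_mul_distrib, ← map_prod]
    rfl
  simp_rw [this]
  rw [← Fintype.prod_sum (fun k (i : Fin 4) =>
    pauli i (x k) (x' k) * (starRingEnd ℂ) (pauli i (y' k) (y k)))]
  simp_rw [pauli_sum]
  by_cases h : x = y' ∧ y = x'
  · simp [h.1, h.2, funext_iff.mp h.1, funext_iff.mp h.2]
  · rw [if_neg h, mul_zero]
    have : ∃ k, ¬(x k = y' k ∧ y k = x' k) := by
      by_contra hc
      push_neg at hc
      exact h ⟨funext fun k => (hc k).1, funext fun k => (hc k).2⟩
    obtain ⟨k, hk⟩ := this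
    exact Finset.prod_eq_zero (Finset.mem_univ k)
      (if_neg hk : (if x k = y' k ∧ y k = x' k then (2:ℂ) else 0) = 0)

/-- Total Pauli correlation equals swap expectation:
`Σ_s tr((E_s ⊗ E_sᴴ) ρ) = 2^n · tr(S ρ)`. -/
theorem stmt19 (n : ℕ) (hn : 1 ≤ n)
    (ρ : Matrix ((Fin n → Fin 2) × (Fin n → Fin 2))
      ((Fin n → Fin 2) × (Fin n → Fin 2)) ℂ) :
    ∑ s : Fin n → Fin 4, ((pauliString n s ⊗ₖ (pauliString n s)ᴴ) * ρ).trace =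
      (2 : ℂ) ^ n * (swapN n * ρ).trace := by
  rw [← Matrix.trace_sum, ← Finset.sum_mul, key, smul_mul_assoc, Matrix.trace_smul,
    smul_eq_mul]
end
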